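/- If G is a graph such that both G and its complement are distance-hereditary (equivalently, G has no induced C5, House, P5, Gem, or co-Gem), then for every vertex v, the subgraph induced on the open neighbourhood N(v) is P4-free, and the subgraph induced on the complement of the closed neighbourhood V \ N[v] is P4-free. -/
import Mathlib


open SimpleGraph

/-- The path graph on 4 vertices. -/
def P4 : SimpleGraph (Fin 4) := fromEdgeSet {s(0,1), s(1,2), s(2,3)}

/-- `G` contains an induced copy of `H`. -/
def HasInducedCopy {α β : Type*} (H : SimpleGraph α) (G : SimpleGraph β) : Prop :=
  Nonempty (H ↪g G)

/-- A graph is distance-hereditary if every connected induced subgraph preserves distances. -/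
def DistanceHereditary {V : Type*} (G : SimpleGraph V) : Prop :=
  ∀ s : Set V, (G.induce s).Connected → ∀ u v : s, (G.induce s).dist u v = G.dist u v

instance : DecidableRel P4.Adj := fun a b =>
  decidable_of_iff ((s(a,b) = s(0,1) ∨ s(a,b) = s(1,2) ∨ s(a,b) = s(2,3)) ∧ a ≠ b)
    (by simp [P4, fromEdgeSet_adj, Set.mem_insert_iff])

lemma P4_eq_pathGraph : P4 = pathGraph 4 := by
  ext a b
  rw [pathGraph_adj]
  revert a b; decide

lemma P4_connected : P4.Connected := P4_eq_pathGraph ▸ pathGraph_connected 3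

lemma short_walk {V : Type*} {G : SimpleGraph V} {a b : V} (q : G.Walk a b) (h : q.length ≤ 2) :
    a = b ∨ G.Adj a b ∨ ∃ c, G.Adj a c ∧ G.Adj c b := by
  match q with
  | .nil => exact Or.inl rfl
  | .cons h1 .nil => exact Or.inr (Or.inl h1)
  | .cons h1 (.cons h2 .nil) => exact Or.inr (Or.inr ⟨_, h1, h2⟩)
  | .cons _ (.cons _ (.cons _ _)) => simp [SimpleGraph.Walk.length_cons] at h

/-- If a distance-hereditary graph contained an induced `P4` together with a vertex adjacent to
all four of its vertices, the induced subgraph on the `P4` would have distance 3 between its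
endpoints while the ambient distance is at most 2 (through the apex), a contradiction. -/
lemma apex_absurd {V : Type*} (H : SimpleGraph V) (hH : DistanceHereditary H)
    (f : Fin 4 → V) (hinj : Function.Injective f)
    (hadj : ∀ i j, H.Adj (f i) (f j) ↔ P4.Adj i j)
    (x : V) (hx : ∀ i, H.Adj x (f i)) : False := by
  set s : Set V := Set.range f with hs
  have mem : ∀ i, f i ∈ s := fun i => ⟨i, rfl⟩
  let e : P4 ≃g H.induce s :=
    { toEquiv := Equiv.ofInjective f hinj
      map_rel_iff' := by
        intro a b
        simp only [Equiv.ofInjective_apply, comap_adj, Function.Embedding.coe_subtype]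
        exact hadj a b }
  have conn : (H.induce s).Connected := e.connected_iff.mp P4_connected
  have hd := hH s conn ⟨f 0, mem 0⟩ ⟨f 3, mem 3⟩
  have hle : H.dist (f 0) (f 3) ≤ 2 := by
    simpa using SimpleGraph.dist_le
      (SimpleGraph.Walk.cons (hx 0).symm (.cons (hx 3) .nil))
  have hreach : (H.induce s).Reachable ⟨f 0, mem 0⟩ ⟨f 3, mem 3⟩ :=
    conn.preconnected _ _
  obtain ⟨p, hp⟩ := hreach.exists_walk_length_eq_dist
  have hplen : p.length ≤ 2 := by rw [hp, hd]; exact hle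
  rcases short_walk p hplen with heq | hA | ⟨c, h1, h2⟩
  · have : f 0 = f 3 := congrArg Subtype.val heq
    have := hinj this
    simp at this
  · have : P4.Adj 0 3 := (hadj 0 3).mp hA
    exact absurd this (by decide)
  · obtain ⟨k, hk⟩ := c.2
    rw [comap_adj] at h1 h2
    simp only [Function.Embedding.coe_subtype] at h1 h2
    rw [← hk] at h1 h2
    have a1 : P4.Adj 0 k := (hadj 0 k).mp h1
    have a2 : P4.Adj k 3 := (hadj k 3).mp h2
    have no : ∀ k : Fin 4, ¬(P4.Adj 0 k ∧ P4.Adj k 3) := by decide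
    exact no k ⟨a1, a2⟩

/-- if `G` and its complement are distance-hereditary then for every vertex `v`
the graph induced on `N(v)` and the graph induced on `V \ N[v]` are P4-free. -/
theorem stmt5 {V : Type*} (G : SimpleGraph V)
    (hG : DistanceHereditary G) (hGc : DistanceHereditary Gᶜ) (v : V) :
    ¬ HasInducedCopy P4 (G.induce (G.neighborSet v)) ∧
    ¬ HasInducedCopy P4 (G.induce {w | w ≠ v ∧ ¬ G.Adj v w}) := by
  constructor
  · rintro ⟨c⟩
    refine apex_absurd G hG (fun i => (c i : V)) ?_ ?_ v ?_
    · exact Subtype.val_injective.comp c.injective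
    · intro i j
      exact c.map_adj_iff
    · exact fun i => (c i).2
  · rintro ⟨c⟩
    set π : Fin 4 → Fin 4 := ![1, 3, 0, 2] with hπ
    refine apex_absurd Gᶜ hGc (fun i => (c (π i) : V)) ?_ ?_ v ?_
    · intro i j hij
      have : π i = π j := c.injective (Subtype.val_injective hij)
      have πinj : Function.Injective π := by rw [hπ]; decide
      exact πinj this
    · intro i j
      rw [compl_adj]
      have hval : ((c (π i) : V) ≠ (c (π j) : V)) ↔ π i ≠ π j := by
        constructor
        · intro h h'; exact h (by rw [h'])
        · intro h h'; exact h (c.injective (Subtype.val_injective h'))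
      have hGadj : G.Adj (c (π i) : V) (c (π j) : V) ↔ P4.Adj (π i) (π j) := by
        rw [show G.Adj (c (π i) : V) (c (π j) : V)
            ↔ (G.induce {w | w ≠ v ∧ ¬ G.Adj v w}).Adj (c (π i)) (c (π j)) from Iff.rfl,
          c.map_adj_iff]
      rw [hval, hGadj]
      have key : ∀ a b : Fin 4, (π a ≠ π b ∧ ¬ P4.Adj (π a) (π b)) ↔ P4.Adj a b := by decide
      exact key i j
    · intro i
      rw [compl_adj]
      obtain ⟨hne, hnadj⟩ := (c (π i)).2
      exact ⟨fun h => hne h.symm, hnadj⟩
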